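/- For λ < 0 and μ = √(−λ/18), the functions x̌(t) = 4e^{μt}, y̌²(t) = μ⁻¹e^{μt}, τ̌₂(t) = −3e^{μt} solve the shrinker limit system x̌' = −x̌τ̌₂/y̌² − x̌²/(2y̌²), (y̌²)' = x̌ + τ̌₂, τ̌₂' = −(4λy̌²(x̌ + (3/2)τ̌₂))/(3x̌). -/

import Mathlib

/-- `x̌(t) = 4 e^{μt}` with `μ = √(−λ/18)`. -/
noncomputable def xcF (lam : ℝ) : ℝ → ℝ :=
  fun t => 4 * Real.exp (Real.sqrt (-lam / 18) * t)

/-- `y̌²(t) = μ⁻¹ e^{μt}` with `μ = √(−λ/18)`. -/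
noncomputable def yc2F (lam : ℝ) : ℝ → ℝ :=
  fun t => (Real.sqrt (-lam / 18))⁻¹ * Real.exp (Real.sqrt (-lam / 18) * t)

/-- `τ̌₂(t) = −3 e^{μt}` with `μ = √(−λ/18)`. -/
noncomputable def tcF (lam : ℝ) : ℝ → ℝ :=
  fun t => -3 * Real.exp (Real.sqrt (-lam / 18) * t)

/-! Each component is a constant multiple of `e^{μt}`, so its derivative is `μ` times itself;
after dividing by `e^{μt}` the three equations become identities in `μ` given `λ = -18 μ²`. -/

open Real

theorem hasDerivAt_const_mul_exp_mul (c μ t : ℝ) :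
    HasDerivAt (fun s => c * exp (μ * s)) (μ * (c * exp (μ * t))) t := by
  have h := ((hasDerivAt_id t).const_mul μ).exp.const_mul c
  simp only [id, mul_one] at h
  exact h.congr_deriv (by ring)

theorem stmt14 (lam : ℝ) (hlam : lam < 0) :
    ∀ t : ℝ,
      HasDerivAt (xcF lam)
        (-(xcF lam t * tcF lam t) / yc2F lam t
          - xcF lam t ^ 2 / (2 * yc2F lam t)) t ∧
      HasDerivAt (yc2F lam) (xcF lam t + tcF lam t) t ∧
      HasDerivAt (tcF lam)
        (-(4 * lam * yc2F lam t * (xcF lam t + 3 / 2 * tcF lam t)) /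
          (3 * xcF lam t)) t := by
  intro t
  unfold xcF yc2F tcF
  set μ := sqrt (-lam / 18) with hμ_def
  have hμ : 0 < μ := sqrt_pos.mpr (by linarith)
  have hlam_eq : lam = -18 * μ ^ 2 := by
    rw [hμ_def, sq_sqrt (by linarith)]
    ring
  refine ⟨?_, ?_, ?_⟩
  · convert hasDerivAt_const_mul_exp_mul 4 μ t using 1
    field_simp
    ring
  · convert hasDerivAt_const_mul_exp_mul μ⁻¹ μ t using 1
    field_simp
    ring
  · convert hasDerivAt_const_mul_exp_mul (-3) μ t using 1
    rw [hlam_eq]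
    field_simp
    ring
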